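/- Let 0 < α < 2 and 0 < s ≤ 1, and let u : ℝ → ℝ be a nonnegative 2π-periodic C² function. Then 0 ≤ ∫_{−π}^{π} u(x)^s · Λ^α u(x) dx. -/

import Mathlib

open MeasureTheory Real

/-- The constant `c_σ = Γ(1+σ) cos((1−σ)π/2) / π`. -/
noncomputable def cFrac (σ : ℝ) : ℝ :=
  Real.Gamma (1 + σ) * Real.cos ((1 - σ) * Real.pi / 2) / Real.pi

/-- The periodized kernel `K_σ(η) = ∑_{k∈ℤ} |η + 2kπ|^{-(1+σ)}`. -/
noncomputable def Kper (σ η : ℝ) : ℝ :=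
  ∑' k : ℤ, |η + 2 * (k : ℝ) * Real.pi| ^ (-(1 + σ))

/-- The fractional Laplacian `Λ^σ f` of a `2π`-periodic function, defined by
`Λ^σ f(x) = (c_σ/2) ∫_{-π}^{π} (2f(x) − f(x+η) − f(x−η)) K_σ(η) dη`. -/
noncomputable def fracLap (σ : ℝ) (f : ℝ → ℝ) (x : ℝ) : ℝ :=
  (cFrac σ / 2) *
    ∫ η in (-Real.pi)..Real.pi, (2 * f x - f (x + η) - f (x - η)) * Kper σ η

/-!
Unfolding `Λ^α`, the integral is the double integral of
`u(x)^s (2u(x) - u(x+η) - u(x-η)) K_α(η)` over `[-π, π]²`. It converges absolutely, since the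
second difference is `O(η²)` and `η² K_α(η) = O(|η|^{1-α})` is integrable for `α < 2`, so Fubini
lets us integrate in `x` first. For fixed `η`, periodicity turns the `x`-integral into
`∫ (u(x)^s - u(x+η)^s) (u(x) - u(x+η)) dx`, which is nonnegative because `t ↦ t^s` is monotone
on `[0, ∞)`. Finally `c_α ≥ 0` because `|(1-α)π/2| ≤ π/2`.
-/

open Set Function
open scoped NNReal

lemma cFrac_nonneg {σ : ℝ} (h0 : 0 ≤ σ) (h2 : σ ≤ 2) : 0 ≤ cFrac σ := by
  refine div_nonneg (mul_nonneg (Gamma_pos_of_pos (by linarith)).le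
    (cos_nonneg_of_mem_Icc ⟨?_, ?_⟩)) pi_pos.le <;> nlinarith [pi_pos]

lemma Kper_nonneg (σ η : ℝ) : 0 ≤ Kper σ η :=
  tsum_nonneg fun _ => rpow_nonneg (abs_nonneg _) _

lemma measurable_Kper (σ : ℝ) : Measurable (Kper σ) :=
  Measurable.tsum fun _ => (measurable_id.add_const _).abs.pow_const _

/-- On `[-π, π]` only the `k = 0` term of `K_σ` is singular: the others are at most
`(π |k|)^{-(1+σ)}`. -/
lemma exists_Kper_le {σ : ℝ} (hσ : 0 < σ) :
    ∃ M, 0 ≤ M ∧ ∀ η, |η| ≤ π → Kper σ η ≤ |η| ^ (-(1 + σ)) + M := by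
  set p := 1 + σ with hp
  have hsum : Summable fun k : ℤ => (π * |(k : ℝ)|) ^ (-p) := by
    simp_rw [mul_rpow pi_pos.le (abs_nonneg _)]
    exact (summable_abs_int_rpow (by linarith)).mul_left _
  refine ⟨∑' k : ℤ, (π * |(k : ℝ)|) ^ (-p),
    tsum_nonneg fun _ => rpow_nonneg (by positivity) _, fun η hη => ?_⟩
  have hterm : ∀ k : ℤ, |η + 2 * k * π| ^ (-p) ≤
      (π * |(k : ℝ)|) ^ (-p) + if k = 0 then |η| ^ (-p) else 0 := by
    intro k
    rcases eq_or_ne k 0 with rfl | hk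
    · simp [zero_rpow (neg_ne_zero.2 (by linarith : p ≠ 0))]
    · have hk1 : (1 : ℝ) ≤ |(k : ℝ)| := by exact_mod_cast Int.one_le_abs hk
      have hdist : π * |(k : ℝ)| ≤ |η + 2 * k * π| := by
        have h2k : |2 * (k : ℝ) * π| = 2 * π * |(k : ℝ)| := by
          rw [abs_mul, abs_mul, abs_two, abs_of_pos pi_pos]; ring
        have := abs_sub_abs_le_abs_add (2 * (k : ℝ) * π) η
        rw [h2k, add_comm] at this
        nlinarith [pi_pos]
      simpa [hk] using rpow_le_rpow_of_nonpos (by positivity) hdist (by linarith)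
  have hdom := hsum.add (hasSum_ite_eq (0 : ℤ) (|η| ^ (-p))).summable
  calc Kper σ η
        ≤ ∑' k : ℤ, ((π * |(k : ℝ)|) ^ (-p) + if k = 0 then |η| ^ (-p) else 0) :=
        (hdom.of_nonneg_of_le (fun _ => rpow_nonneg (abs_nonneg _) _) hterm).tsum_le_tsum
          hterm hdom
    _ = |η| ^ (-p) + ∑' k : ℤ, (π * |(k : ℝ)|) ^ (-p) := by
        rw [hsum.tsum_add (hasSum_ite_eq (0 : ℤ) _).summable, tsum_ite_eq, add_comm]

lemma intervalIntegrable_abs_rpow {r : ℝ} (hr : -1 < r) (a b : ℝ) :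
    IntervalIntegrable (fun x : ℝ => |x| ^ r) volume a b := by
  have hball : IntegrableOn (fun x : ℝ => |x| ^ r) (Metric.ball 0 (|a| + |b| + 1)) :=
    integrableOn_ball_of_norm_le_rpow (μ := volume) (α := -r) (C := 1) (by simp)
      (by rw [Module.finrank_self, Nat.cast_one]; linarith)
      (ae_of_all _ fun x => by simp [abs_of_nonneg (rpow_nonneg (abs_nonneg x) r)])
      (continuous_abs.measurable.pow_const r).aestronglyMeasurable
  refine intervalIntegrable_iff.2 (hball.mono_set fun x hx => ?_)
  rw [mem_ball_zero_iff, Real.norm_eq_abs, abs_lt]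
  rcases mem_uIoc.1 hx with ⟨h1, h2⟩ | ⟨h1, h2⟩ <;>
    constructor <;> linarith [le_abs_self a, neg_abs_le a, le_abs_self b, neg_abs_le b]

lemma sq_mul_abs_rpow_neg_le (σ η : ℝ) : η ^ 2 * |η| ^ (-(1 + σ)) ≤ |η| ^ (1 - σ) := by
  rcases eq_or_ne η 0 with rfl | hη
  · simpa using rpow_nonneg le_rfl _
  · rw [← sq_abs η, ← rpow_natCast, ← rpow_add (abs_pos.2 hη)]
    exact le_of_eq (by congr 1; push_cast; ring)

lemma integrableOn_sq_mul_Kper {σ : ℝ} (hσ0 : 0 < σ) (hσ2 : σ < 2) :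
    IntegrableOn (fun η => η ^ 2 * Kper σ η) (Ioc (-π) π) := by
  obtain ⟨M, hM0, hM⟩ := exists_Kper_le hσ0
  have hdom : IntegrableOn (fun η : ℝ => |η| ^ (1 - σ) + π ^ 2 * M) (Ioc (-π) π) :=
    ((intervalIntegrable_iff_integrableOn_Ioc_of_le (by linarith [pi_pos])).1
      (intervalIntegrable_abs_rpow (by linarith) _ _)).add
      (integrableOn_const measure_Ioc_lt_top.ne)
  refine hdom.mono' ((measurable_id.pow_const 2).mul (measurable_Kper σ)).aestronglyMeasurable
    ((ae_restrict_iff' measurableSet_Ioc).2 (ae_of_all _ fun η hη => ?_))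
  have hηπ : |η| ≤ π := abs_le.2 ⟨hη.1.le, hη.2⟩
  have hsq : η ^ 2 ≤ π ^ 2 := by rw [← sq_abs]; gcongr
  rw [Real.norm_of_nonneg (mul_nonneg (sq_nonneg η) (Kper_nonneg σ η))]
  calc η ^ 2 * Kper σ η ≤ η ^ 2 * (|η| ^ (-(1 + σ)) + M) := by gcongr; exact hM η hηπ
    _ ≤ |η| ^ (1 - σ) + π ^ 2 * M := by
        rw [mul_add]; gcongr; exact sq_mul_abs_rpow_neg_le σ η

lemma abs_two_mul_sub_sub_le_of_lipschitzOnWith {u : ℝ → ℝ} {K : ℝ≥0} {x η : ℝ}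
    (hu : Differentiable ℝ u) (hK : LipschitzOnWith K (deriv u) (Icc (x - |η|) (x + |η|))) :
    |2 * u x - u (x + η) - u (x - η)| ≤ 2 * K * η ^ 2 := by
  set g : ℝ → ℝ := fun t => u (x + t) + u (x - t)
  have hg : ∀ t, HasDerivAt g (deriv u (x + t) - deriv u (x - t)) t := fun t => by
    have h1 := (hu (x + t)).hasDerivAt.comp t ((hasDerivAt_id t).const_add x)
    have h2 := (hu (x - t)).hasDerivAt.comp t ((hasDerivAt_id t).const_sub x)
    exact (h1.add h2).congr_deriv (by ring)
  have hbound : ∀ t ∈ uIcc 0 η, ‖deriv u (x + t) - deriv u (x - t)‖ ≤ 2 * K * |η| := by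
    intro t ht
    have htη : |t| ≤ |η| := by
      rw [abs_le]
      rcases mem_uIcc.1 ht with ⟨h1, h2⟩ | ⟨h1, h2⟩ <;>
        constructor <;> linarith [le_abs_self η, neg_abs_le η, abs_nonneg η]
    have hmem : ∀ {y}, |y| ≤ |η| → x + y ∈ Icc (x - |η|) (x + |η|) := fun hy => by
      constructor <;> linarith [abs_le.1 hy]
    have := hK.dist_le_mul (x + t) (hmem htη) (x - t) (hmem (by rwa [abs_neg]))
    rw [Real.dist_eq, Real.dist_eq, show x + t - (x - t) = 2 * t by ring, abs_mul, abs_two] at this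
    rw [Real.norm_eq_abs]
    nlinarith [K.coe_nonneg]
  have hmvt := (convex_uIcc 0 η).norm_image_sub_le_of_norm_hasDerivWithin_le
    (fun t _ => (hg t).hasDerivWithinAt) hbound left_mem_uIcc right_mem_uIcc
  calc |2 * u x - u (x + η) - u (x - η)| = ‖g η - g 0‖ := by
        rw [Real.norm_eq_abs, ← abs_neg]; simp only [g, add_zero, sub_zero]; ring_nf
    _ ≤ 2 * K * |η| * ‖η - 0‖ := hmvt
    _ = 2 * K * η ^ 2 := by rw [sub_zero, Real.norm_eq_abs, mul_assoc, abs_mul_abs_self, sq]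

lemma ContDiff.exists_abs_two_mul_sub_sub_le {u : ℝ → ℝ} (hu : ContDiff ℝ 2 u) (R : ℝ) :
    ∃ C, ∀ x η, |x| ≤ R → |η| ≤ R →
      |2 * u x - u (x + η) - u (x - η)| ≤ C * η ^ 2 := by
  obtain ⟨K, hK⟩ := (hu.deriv' (n := 1)).contDiffOn.exists_lipschitzOnWith one_ne_zero
    (convex_Icc (-(2 * R)) (2 * R)) isCompact_Icc
  refine ⟨2 * K, fun x η hx hη => abs_two_mul_sub_sub_le_of_lipschitzOnWith
    (hu.differentiable two_ne_zero) (hK.mono (Icc_subset_Icc ?_ ?_))⟩ <;>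
    linarith [abs_le.1 hx, abs_le.1 hη, abs_nonneg η]

lemma integrable_mul_two_mul_sub_sub_mul_Kper {σ : ℝ} (hσ0 : 0 < σ) (hσ2 : σ < 2)
    {w u : ℝ → ℝ} (hw : Continuous w) (hu : ContDiff ℝ 2 u) :
    Integrable (uncurry fun x η => w x * (2 * u x - u (x + η) - u (x - η)) * Kper σ η)
      ((volume.restrict (Ioc (-π) π)).prod (volume.restrict (Ioc (-π) π))) := by
  obtain ⟨C, hC⟩ := hu.exists_abs_two_mul_sub_sub_le π
  obtain ⟨B, hB⟩ :=
    isCompact_Icc.exists_bound_of_continuousOn (hw.continuousOn (s := Icc (-π) π))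
  have hdom : Integrable (fun z : ℝ × ℝ => B * C * (z.2 ^ 2 * Kper σ z.2))
      ((volume.restrict (Ioc (-π) π)).prod (volume.restrict (Ioc (-π) π))) :=
    (integrableOn_const (C := B * C) measure_Ioc_lt_top.ne).mul_prod
      (integrableOn_sq_mul_Kper hσ0 hσ2)
  have hcont : Continuous fun z : ℝ × ℝ =>
      w z.1 * (2 * u z.1 - u (z.1 + z.2) - u (z.1 - z.2)) := by
    have := hu.continuous; fun_prop
  refine hdom.mono'
    (hcont.measurable.mul ((measurable_Kper σ).comp measurable_snd)).aestronglyMeasurable ?_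
  rw [Measure.prod_restrict]
  filter_upwards [ae_restrict_mem (measurableSet_Ioc.prod measurableSet_Ioc)]
    with ⟨x, η⟩ ⟨hx, hη⟩
  have habs : ∀ {t}, t ∈ Ioc (-π) π → |t| ≤ π := fun ht => abs_le.2 ⟨ht.1.le, ht.2⟩
  have hwx : |w x| ≤ B := hB x (Ioc_subset_Icc_self hx)
  simp only [uncurry_apply_pair, norm_mul, Real.norm_eq_abs, abs_of_nonneg (Kper_nonneg σ η)]
  calc |w x| * |2 * u x - u (x + η) - u (x - η)| * Kper σ η
        ≤ B * (C * η ^ 2) * Kper σ η := by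
        gcongr
        · exact Kper_nonneg σ η
        · exact (abs_nonneg _).trans hwx
        · exact hC x η (habs hx) (habs hη)
    _ = B * C * (η ^ 2 * Kper σ η) := by ring

lemma integral_integral_nonneg_of_forall_integral_nonneg {F : ℝ → ℝ → ℝ} {a b : ℝ}
    (hab : a ≤ b)
    (hF : Integrable (uncurry F) ((volume.restrict (Ioc a b)).prod (volume.restrict (Ioc a b))))
    (h : ∀ y, 0 ≤ ∫ x in a..b, F x y) : 0 ≤ ∫ x in a..b, ∫ y in a..b, F x y := by
  simp_rw [intervalIntegral.integral_of_le hab] at h ⊢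
  rw [integral_integral_swap hF]
  exact integral_nonneg h

lemma Function.Periodic.intervalIntegral_comp_add_right {E : Type*} [NormedAddCommGroup E]
    [NormedSpace ℝ E] {f : ℝ → E} {T : ℝ} (hf : Periodic f T) (a η : ℝ) :
    ∫ x in a..a + T, f (x + η) = ∫ x in a..a + T, f x := by
  rw [intervalIntegral.integral_comp_add_right, add_right_comm, hf.intervalIntegral_add_eq]

/-- With `h x = w x * (u x - u (x - η))` the integrand is
`(w x - w (x + η)) * (u x - u (x + η)) + (h x - h (x + η))`, and `h` is periodic. -/
lemma integral_mul_two_mul_sub_sub_nonneg {w u : ℝ → ℝ} {T : ℝ} (hT : 0 ≤ T)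
    (hw : Continuous w) (hu : Continuous u) (hwT : Periodic w T) (huT : Periodic u T)
    (hwu : ∀ x y, 0 ≤ (w x - w y) * (u x - u y)) (a η : ℝ) :
    0 ≤ ∫ x in a..a + T, w x * (2 * u x - u (x + η) - u (x - η)) := by
  set h : ℝ → ℝ := fun x => w x * (u x - u (x - η))
  have hhT : Periodic h T := fun x => by
    simp only [h, hwT x, huT x, add_sub_right_comm x T η, huT (x - η)]
  have key : ∀ x, w x * (2 * u x - u (x + η) - u (x - η))
      = (w x - w (x + η)) * (u x - u (x + η)) + (h x - h (x + η)) := fun x => by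
    simp only [h, add_sub_cancel_right]; ring
  have hint : ∀ {f : ℝ → ℝ}, Continuous f → IntervalIntegrable f volume a (a + T) :=
    fun hf => hf.intervalIntegrable _ _
  rw [intervalIntegral.integral_congr fun x _ => key x,
    intervalIntegral.integral_add (hint (by fun_prop)) (hint (by fun_prop)),
    intervalIntegral.integral_sub (hint (by fun_prop)) (hint (by fun_prop)),
    hhT.intervalIntegral_comp_add_right, sub_self, add_zero]
  exact intervalIntegral.integral_nonneg (by linarith) fun x _ => hwu x (x + η)

theorem stmt8_general (α s : ℝ) (hα0 : 0 < α) (hα2 : α < 2) (hs0 : 0 < s)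
    (u : ℝ → ℝ) (hC2 : ContDiff ℝ 2 u) (hper : Function.Periodic u (2 * Real.pi))
    (hpos : ∀ x, 0 ≤ u x) :
    0 ≤ ∫ x in (-Real.pi)..Real.pi, u x ^ s * fracLap α u x := by
  have hw : Continuous fun x => u x ^ s := hC2.continuous.rpow_const fun _ => Or.inr hs0.le
  have hwu : ∀ x y, 0 ≤ (u x ^ s - u y ^ s) * (u x - u y) := fun x y => by
    rcases le_total (u x) (u y) with h | h
    · exact mul_nonneg_of_nonpos_of_nonpos
        (sub_nonpos.2 (rpow_le_rpow (hpos x) h hs0.le)) (sub_nonpos.2 h)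
    · exact mul_nonneg (sub_nonneg.2 (rpow_le_rpow (hpos y) h hs0.le)) (sub_nonneg.2 h)
  have hrw : ∀ x, u x ^ s * fracLap α u x = cFrac α / 2 *
      ∫ η in (-π)..π, u x ^ s * (2 * u x - u (x + η) - u (x - η)) * Kper α η := fun x => by
    simp_rw [fracLap, mul_assoc (u x ^ s), intervalIntegral.integral_const_mul]; ring
  simp_rw [hrw, intervalIntegral.integral_const_mul]
  refine mul_nonneg (div_nonneg (cFrac_nonneg hα0.le hα2.le) zero_le_two)
    (integral_integral_nonneg_of_forall_integral_nonneg (by linarith [pi_pos])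
      (integrable_mul_two_mul_sub_sub_mul_Kper hα0 hα2 hw hC2) fun η => ?_)
  have hx := integral_mul_two_mul_sub_sub_nonneg two_pi_pos.le hw hC2.continuous
    (hper.comp (· ^ s)) hper hwu (-π) η
  rw [show -π + 2 * π = π by ring] at hx
  rw [intervalIntegral.integral_mul_const]
  exact mul_nonneg hx (Kper_nonneg α η)

theorem stmt8 (α s : ℝ) (hα0 : 0 < α) (hα2 : α < 2) (hs0 : 0 < s) (hs1 : s ≤ 1)
    (u : ℝ → ℝ) (hC2 : ContDiff ℝ 2 u) (hper : Function.Periodic u (2 * Real.pi))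
    (hpos : ∀ x, 0 ≤ u x) :
    0 ≤ ∫ x in (-Real.pi)..Real.pi, u x ^ s * fracLap α u x :=
  stmt8_general α s hα0 hα2 hs0 u hC2 hper hpos
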